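/- arXiv:2602.02423 — 2 statements merged into one kernel-verified Lean document; each statement's English description precedes it below -/
import Mathlib

section
/- Let p be prime and let F be a C_p-Mackey field. Then F(C_p/C_p) is a field. -/
/-!
STATEMENT 5: If `F` is a `C_p`-Mackey field (a nonzero commutative `C_p`-Green
functor with no nonzero proper ideals), then `F(C_p/C_p)` is a field.
-/
theorem stmt5 (p : ℕ) (hp : p.Prime)
    (Top Bot : Type) [CommRing Top] [CommRing Bot]
    (res : Top →+* Bot) (tr : Bot →+ Top) (γ : Bot →+* Bot)
    (hord : ∀ x : Bot, (⇑γ)^[p] x = x)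
    (hdc : ∀ x : Bot, res (tr x) = ∑ i ∈ Finset.range p, (⇑γ)^[i] x)
    (hfix : ∀ a : Top, γ (res a) = res a)
    (htrγ : ∀ x : Bot, tr (γ x) = tr x)
    (hfrob : ∀ (x : Bot) (a : Top), tr x * a = tr (x * res a))
    -- `F` is nonzero:
    (hnz : Nontrivial Top ∨ Nontrivial Bot)
    -- `F` has no nonzero proper ideals:
    (hfield : ∀ (IT : Ideal Top) (IB : Ideal Bot),
      (∀ x ∈ IB, tr x ∈ IT) → (∀ a ∈ IT, res a ∈ IB) → (∀ x ∈ IB, γ x ∈ IB) →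
      (IT = ⊥ ∧ IB = ⊥) ∨ (IT = ⊤ ∧ IB = ⊤)) :
    IsField Top := by
  -- Top is nontrivial
  have hTop : Nontrivial Top := by
    rcases hnz with h | h
    · exact h
    · by_contra hT
      have : Subsingleton Top := not_nontrivial_iff_subsingleton.mp hT
      have h10 : (1 : Top) = 0 := Subsingleton.elim _ _
      have : (1 : Bot) = 0 := by
        calc (1 : Bot) = res 1 := (map_one res).symm
        _ = res 0 := by rw [h10]
        _ = 0 := map_zero res
      exact one_ne_zero this
  refine ⟨hTop.exists_pair_ne, mul_comm, ?_⟩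
  intro a ha
  set IT : Ideal Top := Ideal.span {a}
  set IB : Ideal Bot := Ideal.span {res a}
  have h1 : ∀ x ∈ IB, tr x ∈ IT := by
    intro x hx
    rcases Ideal.mem_span_singleton'.mp hx with ⟨y, rfl⟩
    have : tr (y * res a) = tr y * a := (hfrob y a).symm
    rw [this]
    exact Ideal.mul_mem_left _ _ (Ideal.mem_span_singleton_self a)
  have h2 : ∀ b ∈ IT, res b ∈ IB := by
    intro b hb
    rcases Ideal.mem_span_singleton'.mp hb with ⟨c, rfl⟩
    rw [map_mul]
    exact Ideal.mul_mem_left _ _ (Ideal.mem_span_singleton_self _)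
  have h3 : ∀ x ∈ IB, γ x ∈ IB := by
    intro x hx
    rcases Ideal.mem_span_singleton'.mp hx with ⟨y, rfl⟩
    rw [map_mul, hfix]
    exact Ideal.mul_mem_left _ _ (Ideal.mem_span_singleton_self _)
  rcases hfield IT IB h1 h2 h3 with ⟨hITbot, _⟩ | ⟨hITtop, _⟩
  · exfalso
    have : a ∈ (⊥ : Ideal Top) := hITbot ▸ Ideal.mem_span_singleton_self a
    exact ha (Ideal.mem_bot.mp this)
  · have : (1 : Top) ∈ IT := hITtop ▸ Submodule.mem_top
    rcases Ideal.mem_span_singleton'.mp this with ⟨b, hb⟩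
    exact ⟨b, by rw [mul_comm]; exact hb⟩
end

section
/- Let p be prime and let F be a C_p-Mackey field with F(C_p/e) ≠ 0. Then the transfer map tr : F(C_p/e) → F(C_p/C_p) is nonzero. -/
/-!
STATEMENT 6: If `F` is a `C_p`-Mackey field with `F(C_p/e) ≠ 0`, then the
transfer map `tr : F(C_p/e) → F(C_p/C_p)` is nonzero.
-/
theorem stmt6 (p : ℕ) (hp : p.Prime)
    (Top Bot : Type) [CommRing Top] [CommRing Bot]
    (res : Top →+* Bot) (tr : Bot →+ Top) (γ : Bot →+* Bot)
    (hord : ∀ x : Bot, (⇑γ)^[p] x = x)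
    (hdc : ∀ x : Bot, res (tr x) = ∑ i ∈ Finset.range p, (⇑γ)^[i] x)
    (hfix : ∀ a : Top, γ (res a) = res a)
    (htrγ : ∀ x : Bot, tr (γ x) = tr x)
    (hfrob : ∀ (x : Bot) (a : Top), tr x * a = tr (x * res a))
    -- `F(C_p/e) ≠ 0`:
    (hnzB : Nontrivial Bot)
    -- `F` has no nonzero proper ideals:
    (hfield : ∀ (IT : Ideal Top) (IB : Ideal Bot),
      (∀ x ∈ IB, tr x ∈ IT) → (∀ a ∈ IT, res a ∈ IB) → (∀ x ∈ IB, γ x ∈ IB) →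
      (IT = ⊥ ∧ IB = ⊥) ∨ (IT = ⊤ ∧ IB = ⊤)) :
    tr ≠ 0 := by
  intro htr
  have h := hfield ⊥ ⊤
    (fun x _ => by simp [htr])
    (fun a _ => trivial)
    (fun x _ => trivial)
  rcases h with ⟨_, hB⟩ | ⟨hT, _⟩
  · exact bot_ne_top hB.symm
  · have h1 : (1 : Top) = 0 := by
      have : (1 : Top) ∈ (⊥ : Ideal Top) := hT ▸ trivial
      simpa using this
    have : (1 : Bot) = 0 := by
      calc (1 : Bot) = res 1 := (map_one res).symm
        _ = res 0 := by rw [h1]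
        _ = 0 := map_zero res
    exact one_ne_zero this
end
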